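/- arXiv:2310.11809 — 3 statements merged into one kernel-verified Lean document; each statement's English description precedes it below -/
import Mathlib

section
/- Let D40 = ⟨a, b | a^20 = b^2 = e, ab = ba^{-1}⟩ be the dihedral group of order 40. Then the power graph P(D40) is cyclically separable, yet ∂(D40) = 1. In particular, the converse of the implication '∂(G) ≥ 3 implies P(G) is cyclically separable' fails for general finite groups. -/
/-- The power graph of a group `G`: distinct `x, y` are adjacent iff one is a power
of the other. -/
def powerGraph (G : Type*) [Group G] : SimpleGraph G where
  Adj x y := x ≠ y ∧ (x ∈ Subgroup.zpowers y ∨ y ∈ Subgroup.zpowers x)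
  symm := ⟨fun _ _ h => ⟨h.1.symm, h.2.symm⟩⟩
  loopless := ⟨fun _ h => h.1 rfl⟩

/-- The enhanced power graph of a group `G`: distinct `x, y` are adjacent iff they
lie in a common cyclic subgroup. -/
def enhancedPowerGraph (G : Type*) [Group G] : SimpleGraph G where
  Adj x y := x ≠ y ∧ ∃ z : G, x ∈ Subgroup.zpowers z ∧ y ∈ Subgroup.zpowers z
  symm := ⟨fun _ _ h => ⟨h.1.symm, h.2.choose, h.2.choose_spec.2, h.2.choose_spec.1⟩⟩
  loopless := ⟨fun _ h => h.1 rfl⟩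

/-- A subgroup is a maximal cyclic subgroup if it is cyclic and not properly contained
in any other cyclic subgroup. -/
def IsMaximalCyclic {G : Type*} [Group G] (M : Subgroup G) : Prop :=
  (∃ x : G, M = Subgroup.zpowers x) ∧
    ∀ N : Subgroup G, (∃ y : G, N = Subgroup.zpowers y) → M ≤ N → M = N

/-- The difference number `∂(G)`: the maximum of
`min (|M \ N|, |N \ M|)` over pairs of maximal cyclic subgroups `M, N`. -/
noncomputable def diffNumber (G : Type*) [Group G] : ℕ :=
  sSup { n : ℕ | ∃ M N : Subgroup G, IsMaximalCyclic M ∧ IsMaximalCyclic N ∧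
    n = min (((M : Set G) \ (N : Set G)).ncard) (((N : Set G) \ (M : Set G)).ncard) }

/-- A graph has a cycle. -/
def HasCycle {V : Type*} (Γ : SimpleGraph V) : Prop :=
  ∃ (v : V) (w : Γ.Walk v v), w.IsCycle

/-- `S` is a cyclic vertex cutset of `Γ` if `Γ - S` is disconnected and at least two
of its connected components contain a cycle. -/
def IsCyclicVertexCutset {V : Type*} (Γ : SimpleGraph V) (S : Set V) : Prop :=
  ¬ (Γ.induce Sᶜ).Connected ∧
    ∃ u v : ↥Sᶜ, ¬ (Γ.induce Sᶜ).Reachable u v ∧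
      (∃ w : (Γ.induce Sᶜ).Walk u u, w.IsCycle) ∧
      (∃ w : (Γ.induce Sᶜ).Walk v v, w.IsCycle)

/-- A graph is cyclically separable if it has a cyclic vertex cutset. -/
def CyclicallySeparable {V : Type*} (Γ : SimpleGraph V) : Prop :=
  ∃ S : Set V, IsCyclicVertexCutset Γ S

/-- The cyclic vertex connectivity: the minimum cardinality of a cyclic vertex cutset,
`⊤ = ∞` if there is none. -/
noncomputable def cyclicVertexConnectivity {V : Type*} (Γ : SimpleGraph V) : ℕ∞ :=
  ⨅ S ∈ {S : Set V | IsCyclicVertexCutset Γ S}, (S.ncard : ℕ∞)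

/-- The vertex connectivity: the minimum number of vertices whose deletion results in a
disconnected or trivial graph. -/
noncomputable def vertexConnectivity {V : Type*} (Γ : SimpleGraph V) : ℕ :=
  sInf { n : ℕ | ∃ S : Set V, S.ncard = n ∧
    ((Sᶜ : Set V).Subsingleton ∨ ¬ (Γ.induce Sᶜ).Connected) }

/-! For an element `x` of order at least 4, `{x, x⁻¹, x²}` is a triangle of the power graph
inside `⟨x⟩ \ {1}`, and nontrivial elements of subgroups of coprime orders are never adjacent.
So two elements of coprime orders `≥ 4` (in `D₄₀`: `r 4` of order 5 and `r 5` of order 4) give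
two triangles which end up in different components once every other vertex is deleted.

A maximal cyclic subgroup of a dihedral group is either the rotation subgroup `⟨r 1⟩` or a
reflection subgroup `{1, sr i}`. A reflection subgroup minus any subgroup has at most one
element, and two distinct reflection subgroups differ in exactly one element each, so `∂ = 1`. -/

open Subgroup

namespace SimpleGraph

variable {V : Type*} {Γ : SimpleGraph V}

lemma exists_isCycle_of_triangle {a b c : V} (hab : Γ.Adj a b) (hbc : Γ.Adj b c)
    (hca : Γ.Adj c a) : ∃ w : Γ.Walk a a, w.IsCycle :=
  ⟨.cons hab (.cons hbc (.cons hca .nil)), by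
    simp [Walk.isCycle_def, hab.ne, hbc.ne, hca.ne, hab.ne.symm, hca.ne.symm]⟩

lemma Reachable.mem_left_of_induce_compl_compl {A B : Set V}
    (hAB : ∀ a ∈ A, ∀ b ∈ B, ¬ Γ.Adj a b) {u v : ↥(A ∪ B)ᶜᶜ}
    (h : (Γ.induce (A ∪ B)ᶜᶜ).Reachable u v) (hu : u.1 ∈ A) : v.1 ∈ A := by
  rw [reachable_eq_reflTransGen] at h
  induction h with
  | refl => exact hu
  | @tail _ z _ hadj hA =>
    have hz : z.1 ∈ A ∪ B := not_not.1 z.2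
    exact hz.resolve_right fun hB => hAB _ hA _ hB hadj

theorem isCyclicVertexCutset_compl_of_is3Clique {A B : Finset V} (hA : Γ.IsNClique 3 A)
    (hB : Γ.IsNClique 3 B) (hAB : ∀ a ∈ A, ∀ b ∈ B, ¬ Γ.Adj a b) :
    IsCyclicVertexCutset Γ (↑A ∪ ↑B)ᶜ := by
  classical
  obtain ⟨a₁, a₂, a₃, h₁₂, h₁₃, h₂₃, rfl⟩ := is3Clique_iff.1 hA
  obtain ⟨b₁, b₂, b₃, k₁₂, k₁₃, k₂₃, rfl⟩ := is3Clique_iff.1 hB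
  set T : Set V := ↑({a₁, a₂, a₃} : Finset V) ∪ ↑({b₁, b₂, b₃} : Finset V)
  have mem : ∀ x ∈ T, x ∈ Tᶜᶜ := fun _ hx => not_not.2 hx
  let u : ↥Tᶜᶜ := ⟨a₁, mem _ (by simp [T])⟩
  let v : ↥Tᶜᶜ := ⟨b₁, mem _ (by simp [T])⟩
  have huv : ¬ (Γ.induce Tᶜᶜ).Reachable u v := fun h =>
    hAB b₁ (h.mem_left_of_induce_compl_compl hAB (by simp [u])) b₂ (by simp) k₁₂
  refine ⟨fun h => huv (h.preconnected u v), u, v, huv, ?_, ?_⟩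
  · exact exists_isCycle_of_triangle (b := ⟨a₂, mem _ (by simp [T])⟩)
      (c := ⟨a₃, mem _ (by simp [T])⟩) h₁₂ h₂₃ h₁₃.symm
  · exact exists_isCycle_of_triangle (b := ⟨b₂, mem _ (by simp [T])⟩)
      (c := ⟨b₃, mem _ (by simp [T])⟩) k₁₂ k₂₃ k₁₃.symm

end SimpleGraph

section PowerGraph

variable {G : Type*} [Group G]

lemma powerGraph_is3Clique [DecidableEq G] {x : G} (hx : 4 ≤ orderOf x) :
    (powerGraph G).IsNClique 3 {x, x⁻¹, x ^ 2} := by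
  have h1 : x ≠ 1 := by simpa using pow_ne_one_of_lt_orderOf one_ne_zero (by omega : 1 < _)
  have h2 : x ^ 2 ≠ 1 := pow_ne_one_of_lt_orderOf two_ne_zero (by omega)
  have h3 : x ^ 3 ≠ 1 := pow_ne_one_of_lt_orderOf three_ne_zero (by omega)
  refine SimpleGraph.is3Clique_triple_iff.2 ⟨⟨?_, Or.inr (inv_mem (mem_zpowers x))⟩,
    ⟨?_, Or.inr (npow_mem_zpowers x 2)⟩, ⟨?_, Or.inr ?_⟩⟩
  · exact fun h => h2 (by rw [sq, mul_eq_one_iff_eq_inv, ← h])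
  · exact fun h => h1 (mul_eq_left.1 (by rw [← sq, ← h]))
  · exact fun h => h3 (by rw [pow_succ, ← h, inv_mul_cancel])
  · rw [zpowers_inv]
    exact npow_mem_zpowers x 2

lemma mem_zpowers_and_ne_one_of_mem_triple [DecidableEq G] {x a : G} (hx : 4 ≤ orderOf x)
    (ha : a ∈ ({x, x⁻¹, x ^ 2} : Finset G)) : a ∈ zpowers x ∧ a ≠ 1 := by
  have hx1 : x ≠ 1 := by rintro rfl; simp at hx
  simp only [Finset.mem_insert, Finset.mem_singleton] at ha
  rcases ha with rfl | rfl | rfl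
  · exact ⟨mem_zpowers a, hx1⟩
  · exact ⟨inv_mem (mem_zpowers x), inv_ne_one.2 hx1⟩
  · exact ⟨npow_mem_zpowers x 2, pow_ne_one_of_lt_orderOf (by decide) (by omega)⟩

lemma powerGraph_not_adj_of_coprime_orderOf {x y a b : G}
    (hxy : (orderOf x).Coprime (orderOf y)) (ha : a ∈ zpowers x) (hb : b ∈ zpowers y)
    (ha1 : a ≠ 1) (hb1 : b ≠ 1) : ¬ (powerGraph G).Adj a b := by
  have hdisj : Disjoint (zpowers x) (zpowers y) :=
    disjoint_of_coprime_natCard (by rwa [Nat.card_zpowers, Nat.card_zpowers])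
  rintro ⟨-, hab | hba⟩
  · exact ha1 (disjoint_def.1 hdisj ha (zpowers_le.2 hb hab))
  · exact hb1 (disjoint_def.1 hdisj (zpowers_le.2 ha hba) hb)

theorem powerGraph_cyclicallySeparable_of_coprime_orderOf {x y : G} (hx : 4 ≤ orderOf x)
    (hy : 4 ≤ orderOf y) (hxy : (orderOf x).Coprime (orderOf y)) :
    CyclicallySeparable (powerGraph G) := by
  classical
  refine ⟨_, SimpleGraph.isCyclicVertexCutset_compl_of_is3Clique (powerGraph_is3Clique hx)
    (powerGraph_is3Clique hy) fun a ha b hb => ?_⟩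
  obtain ⟨hax, ha1⟩ := mem_zpowers_and_ne_one_of_mem_triple hx ha
  obtain ⟨hby, hb1⟩ := mem_zpowers_and_ne_one_of_mem_triple hy hb
  exact powerGraph_not_adj_of_coprime_orderOf hxy hax hby ha1 hb1

lemma coe_zpowers_of_sq_eq_one {x : G} (hx : x ^ 2 = 1) : (zpowers x : Set G) = {1, x} := by
  ext a
  refine ⟨?_, ?_⟩
  · rintro ⟨k, rfl⟩
    change x ^ k ∈ _
    rw [zpow_eq_zpow_emod' k hx]
    rcases Int.emod_two_eq_zero_or_one k with h | h <;> simp [h]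
  · rintro (rfl | rfl)
    exacts [one_mem _, mem_zpowers a]

lemma ncard_coe_zpowers_sdiff_le_one {x : G} (hx : x ^ 2 = 1) (N : Subgroup G) :
    ((zpowers x : Set G) \ N).ncard ≤ 1 := by
  rw [coe_zpowers_of_sq_eq_one hx]
  refine (Set.ncard_le_ncard (t := {x}) ?_).trans (Set.ncard_singleton x).le
  rintro a ⟨rfl | rfl, haN⟩
  exacts [absurd N.one_mem haN, rfl]

end PowerGraph

namespace DihedralGroup

variable {n : ℕ}

lemma sr_sq (i : ZMod n) : sr i ^ 2 = 1 := by
  rw [sq, sr_mul_self]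

lemma r_mem_zpowers_r_one (i : ZMod n) : r i ∈ zpowers (r 1 : DihedralGroup n) :=
  mem_zpowers_iff.2 ⟨(i.cast : ℤ), by rw [r_one_zpow, ZMod.intCast_zmod_cast]⟩

lemma sr_notMem_zpowers_r (i j : ZMod n) : sr i ∉ zpowers (r j) := by
  rintro ⟨k, hk⟩
  simp [r_zpow] at hk

lemma isMaximalCyclic_zpowers_sr (i : ZMod n) : IsMaximalCyclic (zpowers (sr i)) := by
  refine ⟨⟨_, rfl⟩, ?_⟩
  rintro _ ⟨y, rfl⟩ hle
  have hmem : sr i ∈ zpowers y := hle (mem_zpowers _)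
  cases y with
  | r j => exact absurd hmem (sr_notMem_zpowers_r i j)
  | sr j =>
    rw [← SetLike.mem_coe, coe_zpowers_of_sq_eq_one (sr_sq j)] at hmem
    rcases hmem with h | h
    · cases h
    · rw [h]

lemma eq_zpowers_r_one_or_sr_of_isMaximalCyclic {M : Subgroup (DihedralGroup n)}
    (hM : IsMaximalCyclic M) : M = zpowers (r 1) ∨ ∃ i, M = zpowers (sr i) := by
  obtain ⟨x, rfl⟩ := hM.1
  cases x with
  | r i => exact .inl (hM.2 _ ⟨_, rfl⟩ (zpowers_le.2 (r_mem_zpowers_r_one i)))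
  | sr i => exact .inr ⟨i, rfl⟩

lemma coe_zpowers_sr_sdiff {i j : ZMod n} (hij : i ≠ j) :
    (zpowers (sr i) : Set (DihedralGroup n)) \ zpowers (sr j) = {sr i} := by
  rw [coe_zpowers_of_sq_eq_one (sr_sq i), coe_zpowers_of_sq_eq_one (sr_sq j)]
  ext x
  simp only [Set.mem_sdiff, Set.mem_insert_iff, Set.mem_singleton_iff]
  constructor
  · rintro ⟨rfl | rfl, hx⟩
    exacts [absurd (.inl rfl) hx, rfl]
  · rintro rfl
    exact ⟨.inr rfl, by simp [one_def, -r_zero, hij]⟩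

theorem diffNumber_eq_one (hn : n ≠ 1) : diffNumber (DihedralGroup n) = 1 := by
  refine IsGreatest.csSup_eq ⟨?_, ?_⟩
  · have : Nontrivial (ZMod n) := ZMod.nontrivial_iff.2 hn
    refine ⟨_, _, isMaximalCyclic_zpowers_sr 0, isMaximalCyclic_zpowers_sr 1, ?_⟩
    rw [coe_zpowers_sr_sdiff zero_ne_one, coe_zpowers_sr_sdiff one_ne_zero]
    simp
  · rintro _ ⟨M, N, hM, hN, rfl⟩
    rcases eq_zpowers_r_one_or_sr_of_isMaximalCyclic hM with rfl | ⟨i, rfl⟩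
    · rcases eq_zpowers_r_one_or_sr_of_isMaximalCyclic hN with rfl | ⟨j, rfl⟩
      · simp
      · exact (min_le_right _ _).trans (ncard_coe_zpowers_sdiff_le_one (sr_sq j) _)
    · exact (min_le_left _ _).trans (ncard_coe_zpowers_sdiff_le_one (sr_sq i) _)

end DihedralGroup

/-- The power graph of the dihedral group `D40` of order 40 is cyclically separable,
yet `∂(D40) = 1`; so the converse of `∂(G) ≥ 3 → P(G)` cyclically separable fails
for general finite groups. -/
theorem dihedral_forty_cyclically_separable_and_diffNumber_one :
    CyclicallySeparable (powerGraph (DihedralGroup 20)) ∧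
    diffNumber (DihedralGroup 20) = 1 := by
  open DihedralGroup in
  refine ⟨powerGraph_cyclicallySeparable_of_coprime_orderOf (x := r 4) (y := r 5) ?_ ?_ ?_,
    diffNumber_eq_one (by decide)⟩ <;>
  simp only [orderOf_r] <;> decide
end

section
/- Let G be a finite non-cyclic 3-group having at most one maximal cyclic subgroup of order greater than 3. Then the power graph P(G) has no cyclic vertex cutset, i.e., P(G) is not cyclically separable. -/
/-!
If `1 ∉ S`, then `P(G) - S` is connected, since `1` is a power of every element. If `1 ∈ S`, a
component of `P(G) - S` all of whose elements have order `3` lies in `⟨u⟩ \ {1}` for any of its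
vertices `u`, a set of two elements, so it carries no cycle. Hence each component with a cycle
contains an element of order greater than `3`, which lies in the unique maximal cyclic subgroup
of order greater than `3`. Any two elements of a cyclic `p`-group are powers of one another, so
these elements are adjacent and the components coincide.
-/

open Subgroup SimpleGraph

section

variable {G : Type*} [Group G]

lemma mem_zpowers_of_orderOf_dvd [Finite G] {g x y : G} (hx : x ∈ zpowers g)
    (hy : y ∈ zpowers g) (hxy : orderOf x ∣ orderOf y) : x ∈ zpowers y := by
  obtain ⟨a, rfl⟩ := (Submonoid.mem_powers_iff _ _).mp (mem_powers_iff_mem_zpowers.mpr hx)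
  obtain ⟨b, rfl⟩ := (Submonoid.mem_powers_iff _ _).mp (mem_powers_iff_mem_zpowers.mpr hy)
  set n := orderOf g
  set e := n.gcd b
  have hge : g ^ e ∈ zpowers (g ^ b) := by
    refine ⟨n.gcdB b, ?_⟩
    show (g ^ b) ^ n.gcdB b = g ^ e
    calc (g ^ b) ^ n.gcdB b = g ^ ((n : ℤ) * n.gcdA b) * (g ^ b) ^ n.gcdB b := by
          rw [zpow_mul, zpow_natCast g n, pow_orderOf_eq_one, one_zpow, one_mul]
      _ = g ^ e := by
          rw [← zpow_natCast g b, ← zpow_mul, ← zpow_add, ← Nat.gcd_eq_gcd_ab, zpow_natCast]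
  have hn : 0 < n := (isOfFinOrder_of_finite g).orderOf_pos
  have he : n / e * e = n := Nat.div_mul_cancel (Nat.gcd_dvd_left n b)
  have hne : 0 < n / e := Nat.div_pos (Nat.gcd_le_left b hn) (Nat.gcd_pos_of_pos_left b hn)
  -- `n / e` is the order of `g ^ b`, so `n ∣ a * (n / e)`.
  have hea : e ∣ a := by
    rw [orderOf_pow g (n := b), orderOf_dvd_iff_pow_eq_one, ← pow_mul,
      ← orderOf_dvd_iff_pow_eq_one] at hxy
    exact Nat.dvd_of_mul_dvd_mul_left hne (by rwa [he, mul_comm])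
  obtain ⟨c, rfl⟩ := hea
  rw [pow_mul]
  exact pow_mem hge c

lemma IsPGroup.mem_zpowers_or_mem_zpowers [Finite G] {p : ℕ} [Fact p.Prime] (hG : IsPGroup p G)
    {g x y : G} (hx : x ∈ zpowers g) (hy : y ∈ zpowers g) :
    x ∈ zpowers y ∨ y ∈ zpowers x := by
  obtain ⟨i, hi⟩ := IsPGroup.iff_orderOf.mp hG x
  obtain ⟨j, hj⟩ := IsPGroup.iff_orderOf.mp hG y
  rcases le_total i j with hij | hij
  · exact .inl (mem_zpowers_of_orderOf_dvd hx hy (by rw [hi, hj]; exact pow_dvd_pow p hij))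
  · exact .inr (mem_zpowers_of_orderOf_dvd hy hx (by rw [hi, hj]; exact pow_dvd_pow p hij))

lemma IsPGroup.orderOf_eq_of_ne_one_of_le {p : ℕ} [hp : Fact p.Prime] (hG : IsPGroup p G) {x : G}
    (hx : x ≠ 1) (hxp : orderOf x ≤ p) : orderOf x = p := by
  obtain ⟨k, hk⟩ := IsPGroup.iff_orderOf.mp hG x
  rcases k with _ | _ | k
  · exact absurd (orderOf_eq_one_iff.mp hk) hx
  · simpa using hk
  · rw [hk] at hxp
    exact absurd hxp (by simpa using Nat.pow_lt_pow_right hp.out.one_lt (show 1 < k + 2 by omega))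

lemma zpowers_eq_of_mem_of_orderOf_eq [Finite G] {x y : G} (h : x ∈ zpowers y)
    (hxy : orderOf x = orderOf y) : zpowers x = zpowers y :=
  Subgroup.eq_of_le_of_card_ge (zpowers_le.mpr h) (by rw [Nat.card_zpowers, Nat.card_zpowers, hxy])

lemma exists_isMaximalCyclic_mem [Finite G] (x : G) :
    ∃ M : Subgroup G, IsMaximalCyclic M ∧ x ∈ M := by
  obtain ⟨M, hM, hmax⟩ := Set.Finite.exists_maximalFor id
    {N : Subgroup G | (∃ y, N = zpowers y) ∧ zpowers x ≤ N} (Set.toFinite _)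
    ⟨zpowers x, ⟨x, rfl⟩, le_rfl⟩
  exact ⟨M, ⟨hM.1, fun N hN hMN => le_antisymm hMN (hmax ⟨hN, hM.2.trans hMN⟩ hMN)⟩,
    hM.2 (mem_zpowers x)⟩

lemma reachable_induce_powerGraph_of_mem_zpowers {S : Set G} {x y : S}
    (h : (x : G) ∈ zpowers (y : G)) :
    ((powerGraph G).induce S).Reachable x y := by
  by_cases hxy : x = y
  · exact hxy ▸ .rfl
  · exact Adj.reachable (induce_adj.mpr ⟨Subtype.coe_ne_coe.mpr hxy, .inl h⟩)

lemma connected_induce_powerGraph_of_one_mem {S : Set G} (h1 : (1 : G) ∈ S) :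
    ((powerGraph G).induce S).Connected := by
  have : Nonempty S := ⟨⟨1, h1⟩⟩
  have hone (x : S) : ((powerGraph G).induce S).Reachable x ⟨1, h1⟩ :=
    reachable_induce_powerGraph_of_mem_zpowers (one_mem _) |>.symm
  exact .mk fun x y => (hone x).trans (hone y).symm

lemma mem_zpowers_of_powerGraph_adj [Finite G] {x y : G} (h : (powerGraph G).Adj x y)
    (hxy : orderOf x = orderOf y) : y ∈ zpowers x := by
  rcases h.2 with hx | hy
  · exact zpowers_eq_of_mem_of_orderOf_eq hx hxy ▸ mem_zpowers y
  · exact hy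

lemma exists_reachable_three_lt_orderOf [Finite G] (hG : IsPGroup 3 G) {S : Set G}
    (h1 : (1 : G) ∈ S) {u : ↥Sᶜ} {w : ((powerGraph G).induce Sᶜ).Walk u u}
    (hw : w.IsCycle) :
    ∃ v, ((powerGraph G).induce Sᶜ).Reachable u v ∧ 3 < orderOf (v : G) := by
  by_contra! hsmall
  have hne (v : ↥Sᶜ) : (v : G) ≠ 1 := fun hv => v.2 (hv ▸ h1)
  have horder {v} (huv : ((powerGraph G).induce Sᶜ).Reachable u v) : orderOf (v : G) = 3 :=
    hG.orderOf_eq_of_ne_one_of_le (hne v) (hsmall v huv)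
  have hnbr {v} (huv : ((powerGraph G).induce Sᶜ).Adj u v) :
      (v : G) ∈ (zpowers (u : G) : Set G) \ {1} :=
    ⟨mem_zpowers_of_powerGraph_adj huv ((horder .rfl).trans (horder huv.reachable).symm), hne v⟩
  have hua := w.adj_snd hw.not_nil
  have hub := (w.adj_penultimate hw.not_nil).symm
  -- `u`, its successor and its predecessor on the cycle are three distinct non-identity
  -- elements of a group of order `3`.
  have hcard : ({(u : G), (w.snd : G), (w.penultimate : G)} : Set G).ncard = 3 :=
    Set.ncard_eq_three.mpr ⟨_, _, _, (induce_adj.mp hua).1, (induce_adj.mp hub).1,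
      Subtype.coe_ne_coe.mpr hw.snd_ne_penultimate, rfl⟩
  have hsub : ({(u : G), (w.snd : G), (w.penultimate : G)} : Set G) ⊆
      (zpowers (u : G) : Set G) \ {1} := by
    rintro _ (rfl | rfl | rfl)
    exacts [⟨mem_zpowers _, hne u⟩, hnbr hua, hnbr hub]
  have hcard' : ((zpowers (u : G) : Set G) \ {1}).ncard = 2 := by
    rw [Set.ncard_sdiff_singleton_of_mem (one_mem _), ← Nat.card_coe_set_eq, SetLike.coe_sort_coe,
      Nat.card_zpowers, horder .rfl]
  have := Set.ncard_le_ncard hsub (Set.toFinite _)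
  omega

end

theorem three_group_not_cyclically_separable_general
    (G : Type*) [Group G] [Finite G] (hG : IsPGroup 3 G)
    (h : ∀ M N : Subgroup G, IsMaximalCyclic M → IsMaximalCyclic N →
      3 < Nat.card M → 3 < Nat.card N → M = N) :
    ¬ CyclicallySeparable (powerGraph G) := by
  rintro ⟨S, hdisc, u, v, huv, ⟨wu, hwu⟩, ⟨wv, hwv⟩⟩
  have h1S : (1 : G) ∈ S := by_contra fun h1 => hdisc (connected_induce_powerGraph_of_one_mem h1)
  obtain ⟨x, hux, hx⟩ := exists_reachable_three_lt_orderOf hG h1S hwu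
  obtain ⟨y, hvy, hy⟩ := exists_reachable_three_lt_orderOf hG h1S hwv
  obtain ⟨M, hM, hxM⟩ := exists_isMaximalCyclic_mem (x : G)
  obtain ⟨N, hN, hyN⟩ := exists_isMaximalCyclic_mem (y : G)
  have hMN : M = N := h M N hM hN (hx.trans_le (M.orderOf_le_card (Set.toFinite _) hxM))
    (hy.trans_le (N.orderOf_le_card (Set.toFinite _) hyN))
  obtain ⟨g, rfl⟩ := hM.1
  have hxy : ((powerGraph G).induce Sᶜ).Reachable x y := by
    rcases hG.mem_zpowers_or_mem_zpowers hxM (hMN ▸ hyN) with hxy | hyx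
    · exact reachable_induce_powerGraph_of_mem_zpowers hxy
    · exact (reachable_induce_powerGraph_of_mem_zpowers hyx).symm
  exact huv (hux.trans (hxy.trans hvy.symm))

/-- A finite non-cyclic 3-group with at most one maximal cyclic subgroup of order
greater than 3 has a power graph that is not cyclically separable. -/
theorem three_group_not_cyclically_separable
    (G : Type*) [Group G] [Finite G] (hG : IsPGroup 3 G) (hnc : ¬ IsCyclic G)
    (h : ∀ M N : Subgroup G, IsMaximalCyclic M → IsMaximalCyclic N →
      3 < Nat.card M → 3 < Nat.card N → M = N) :
    ¬ CyclicallySeparable (powerGraph G) :=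
  three_group_not_cyclically_separable_general G hG h
end

section
/- Let p be a prime and G a finite p-group having two maximal cyclic subgroups M1 and M2 with trivial intersection such that |M1| ≥ 4 and |M2| ≥ 4. Then {e} is a cyclic vertex cutset of the power graph P(G), and consequently κ(P(G)) = cκ(P(G)) = 1. -/
/-! If `w ^ p = 1` and `w` is a power of some `a ≠ 1`, then `w` is a power of every nontrivial
element `b` of every cyclic subgroup containing `a`: in a finite cyclic group `⟨b⟩` contains all
elements whose order divides `orderOf b`, and `p ∣ orderOf b` in a `p`-group. Hence `w ∈ ⟨u⟩` is
constant on the connected components of `P(G) - {e}`. Taking `w ≠ 1` in `M₁` with `w ^ p = 1`,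
the trivial intersection puts generators of `M₁` and `M₂` in different components, and each of
them lies on the triangle `x, x², x⁻¹`. As `e` is adjacent to every vertex, `P(G)` itself is
connected, so no smaller cutset exists. -/

section Connectivity

variable {V : Type*} {Γ : SimpleGraph V}

theorem SimpleGraph.exists_isCycle_of_triangle_s14 {a b c : V}
    (hab : Γ.Adj a b) (hbc : Γ.Adj b c) (hca : Γ.Adj c a) : ∃ w : Γ.Walk a a, w.IsCycle :=
  ⟨.cons hab (.cons hbc (.cons hca .nil)), by
    simp [Walk.isCycle_def, hab.ne, hbc.ne, hca.ne, hab.ne.symm, hca.ne.symm, Sym2.eq_swap]⟩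

theorem SimpleGraph.connected_induce_compl_empty_iff :
    (Γ.induce (∅ᶜ : Set V)).Connected ↔ Γ.Connected := by
  rw [Set.compl_empty]
  exact Γ.induceUnivIso.connected_iff

theorem vertexConnectivity_eq_one [Finite V] [Nontrivial V] (hΓ : Γ.Connected) {v : V}
    (hv : ¬ (Γ.induce {v}ᶜ).Connected) : vertexConnectivity Γ = 1 := by
  have hone : 1 ∈ {n : ℕ | ∃ S : Set V, S.ncard = n ∧
      ((Sᶜ : Set V).Subsingleton ∨ ¬ (Γ.induce Sᶜ).Connected)} :=
    ⟨{v}, Set.ncard_singleton v, Or.inr hv⟩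
  have hzero : 0 ∉ {n : ℕ | ∃ S : Set V, S.ncard = n ∧
      ((Sᶜ : Set V).Subsingleton ∨ ¬ (Γ.induce Sᶜ).Connected)} := by
    rintro ⟨S, hS, hsub | hdisc⟩ <;> obtain rfl := (Set.ncard_eq_zero S.toFinite).mp hS
    · exact Set.not_subsingleton_iff.mpr (Set.compl_empty (α := V) ▸ Set.nontrivial_univ) hsub
    · exact hdisc (SimpleGraph.connected_induce_compl_empty_iff.mpr hΓ)
  refine le_antisymm (Nat.sInf_le hone) (Nat.one_le_iff_ne_zero.mpr fun h => ?_)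
  exact (Nat.sInf_eq_zero.mp h).elim hzero (Set.nonempty_of_mem hone).ne_empty

theorem cyclicVertexConnectivity_eq_one [Finite V] (hΓ : Γ.Connected) {v : V}
    (hv : IsCyclicVertexCutset Γ {v}) : cyclicVertexConnectivity Γ = 1 := by
  refine le_antisymm ?_ (le_iInf₂ fun S hS => ?_)
  · exact (iInf₂_le (f := fun (S : Set V) (_ : S ∈ {S | IsCyclicVertexCutset Γ S}) =>
      (S.ncard : ℕ∞)) {v} hv).trans_eq (by simp)
  · have hS : S.Nonempty := Set.nonempty_iff_ne_empty.mpr fun h =>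
      hS.1 (h ▸ SimpleGraph.connected_induce_compl_empty_iff.mpr hΓ)
    exact Nat.one_le_cast.mpr ((Set.ncard_pos S.toFinite).mpr hS)

end Connectivity

theorem IsCyclic.mem_zpowers_of_orderOf_dvd {α : Type*} [Group α] [Finite α] [IsCyclic α]
    {a b : α} (h : orderOf a ∣ orderOf b) : a ∈ Subgroup.zpowers b := by
  classical
  have : Fintype α := Fintype.ofFinite α
  let S : Finset α := {c | c ^ orderOf b = 1}
  have hsub : (Subgroup.zpowers b : Set α).toFinset ⊆ S := fun c hc => by
    simpa [S] using orderOf_dvd_iff_pow_eq_one.mp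
      (orderOf_dvd_of_mem_zpowers (Set.mem_toFinset.mp hc))
  have hcard : S.card ≤ (Subgroup.zpowers b : Set α).toFinset.card := by
    rw [Set.toFinset_card, ← Nat.card_eq_fintype_card, SetLike.coe_sort_coe, Nat.card_zpowers]
    exact IsCyclic.card_pow_eq_one_le (orderOf_pos b)
  have ha : a ∈ S := by simpa [S] using orderOf_dvd_iff_pow_eq_one.mp h
  rw [← Finset.eq_of_subset_of_card_le hsub hcard] at ha
  simpa using ha

section Group

variable {G : Type*} [Group G]

theorem IsOfFinOrder.mem_zpowers_of_orderOf_dvd {y a b : G} (hy : IsOfFinOrder y)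
    (ha : a ∈ Subgroup.zpowers y) (hb : b ∈ Subgroup.zpowers y) (h : orderOf a ∣ orderOf b) :
    a ∈ Subgroup.zpowers b := by
  have : Finite (Subgroup.zpowers y) := hy.finite_zpowers
  obtain ⟨k, hk⟩ := Subgroup.mem_zpowers_iff.mp <|
    IsCyclic.mem_zpowers_of_orderOf_dvd (α := Subgroup.zpowers y) (a := ⟨a, ha⟩) (b := ⟨b, hb⟩)
      (by simpa only [Subgroup.orderOf_mk] using h)
  exact Subgroup.mem_zpowers_iff.mpr ⟨k, congrArg Subtype.val hk⟩

namespace IsPGroup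

variable {p : ℕ}

theorem exists_orderOf_eq_prime_pow_succ (hp : p.Prime) (hG : IsPGroup p G) {x : G}
    (hx : x ≠ 1) : ∃ k, orderOf x = p ^ (k + 1) := by
  have : Fact p.Prime := ⟨hp⟩
  obtain ⟨_ | k, hk⟩ := IsPGroup.iff_orderOf.mp hG x
  · exact absurd (orderOf_eq_one_iff.mp hk) hx
  · exact ⟨k, hk⟩

theorem exists_mem_zpowers_ne_one_pow_eq_one (hp : p.Prime) (hG : IsPGroup p G) {x : G}
    (hx : x ≠ 1) : ∃ w ∈ Subgroup.zpowers x, w ≠ 1 ∧ w ^ p = 1 := by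
  obtain ⟨k, hk⟩ := hG.exists_orderOf_eq_prime_pow_succ hp hx
  refine ⟨x ^ p ^ k, Subgroup.npow_mem_zpowers x _, ?_, ?_⟩
  · exact pow_ne_one_of_lt_orderOf (pow_ne_zero _ hp.ne_zero)
      (hk ▸ Nat.pow_lt_pow_right hp.one_lt k.lt_succ_self)
  · rw [← pow_mul, ← pow_succ, ← hk, pow_orderOf_eq_one]

theorem mem_zpowers_of_pow_eq_one (hp : p.Prime) (hG : IsPGroup p G) {y a b : G}
    (ha : a ∈ Subgroup.zpowers y) (hb : b ∈ Subgroup.zpowers y) (hb₁ : b ≠ 1) (hap : a ^ p = 1) :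
    a ∈ Subgroup.zpowers b := by
  obtain ⟨k, hk⟩ := hG.exists_orderOf_eq_prime_pow_succ hp hb₁
  obtain ⟨n, hn⟩ := hG y
  have hy : IsOfFinOrder y := isOfFinOrder_iff_pow_eq_one.mpr ⟨p ^ n, pow_pos hp.pos n, hn⟩
  exact hy.mem_zpowers_of_orderOf_dvd ha hb <|
      (orderOf_dvd_of_pow_eq_one hap).trans (hk ▸ dvd_pow_self p k.succ_ne_zero)

theorem mem_zpowers_iff_of_mem_zpowers (hp : p.Prime) (hG : IsPGroup p G) {w a b : G}
    (hw : w ^ p = 1) (ha : a ≠ 1) (hab : a ∈ Subgroup.zpowers b) :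
    w ∈ Subgroup.zpowers a ↔ w ∈ Subgroup.zpowers b :=
  ⟨fun h => Subgroup.zpowers_le.mpr hab h,
    fun h => hG.mem_zpowers_of_pow_eq_one hp h hab ha hw⟩

theorem mem_zpowers_iff_of_reachable (hp : p.Prime) (hG : IsPGroup p G) {w : G} (hw : w ^ p = 1)
    {u v : ↥({1}ᶜ : Set G)} (h : ((powerGraph G).induce {1}ᶜ).Reachable u v) :
    w ∈ Subgroup.zpowers u.1 ↔ w ∈ Subgroup.zpowers v.1 := by
  obtain ⟨walk⟩ := h
  induction walk with
  | nil => rfl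
  | @cons a b _ hab _ ih =>
    refine Iff.trans ?_ ih
    rcases hab.2 with hab | hba
    · exact hG.mem_zpowers_iff_of_mem_zpowers hp hw a.2 hab
    · exact (hG.mem_zpowers_iff_of_mem_zpowers hp hw b.2 hba).symm

theorem not_reachable_powerGraph_induce (hp : p.Prime) (hG : IsPGroup p G)
    {u v : ↥({1}ᶜ : Set G)} (huv : Subgroup.zpowers u.1 ⊓ Subgroup.zpowers v.1 = ⊥) :
    ¬ ((powerGraph G).induce {1}ᶜ).Reachable u v := by
  intro h
  obtain ⟨w, hwu, hw₁, hwp⟩ := hG.exists_mem_zpowers_ne_one_pow_eq_one hp u.2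
  have hwv := (hG.mem_zpowers_iff_of_reachable hp hwp h).mp hwu
  exact hw₁ (Subgroup.mem_bot.mp (huv ▸ Subgroup.mem_inf.mpr ⟨hwu, hwv⟩))

end IsPGroup

theorem powerGraph_adj_of_mem_zpowers {x y : G} (hxy : x ≠ y) (h : y ∈ Subgroup.zpowers x) :
    (powerGraph G).Adj x y :=
  ⟨hxy, Or.inr h⟩

theorem powerGraph_connected : (powerGraph G).Connected := by
  refine (powerGraph G).connected_iff_exists_forall_reachable.mpr ⟨1, fun x => ?_⟩
  by_cases hx : x = 1
  · rw [hx]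
  · exact (powerGraph_adj_of_mem_zpowers hx (Subgroup.one_mem _)).symm.reachable

theorem powerGraph_induce_exists_isCycle {u : ↥({1}ᶜ : Set G)} (hu : 4 ≤ orderOf u.1) :
    ∃ w : ((powerGraph G).induce {1}ᶜ).Walk u u, w.IsCycle := by
  obtain ⟨x, hx⟩ := u
  have hpow (n : ℕ) (hn₀ : n ≠ 0) (hn : n < 4) : x ^ n ≠ 1 :=
    pow_ne_one_of_lt_orderOf hn₀ (hn.trans_le hu)
  have hx₂ : x ^ 2 ∈ ({1}ᶜ : Set G) := hpow 2 two_ne_zero (by norm_num)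
  have hxinv : x⁻¹ ∈ ({1}ᶜ : Set G) := inv_ne_one.mpr hx
  have hsq : x ^ 2 ∈ Subgroup.zpowers x⁻¹ := by
    rw [Subgroup.zpowers_inv]; exact Subgroup.npow_mem_zpowers x 2
  have hself : x ∈ Subgroup.zpowers x⁻¹ := by
    rw [Subgroup.zpowers_inv]; exact Subgroup.mem_zpowers x
  refine SimpleGraph.exists_isCycle_of_triangle_s14 (b := ⟨x ^ 2, hx₂⟩) (c := ⟨x⁻¹, hxinv⟩)
    (powerGraph_adj_of_mem_zpowers ?_ (Subgroup.npow_mem_zpowers x 2))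
    (powerGraph_adj_of_mem_zpowers ?_ hsq).symm (powerGraph_adj_of_mem_zpowers ?_ hself)
  · intro h
    exact hpow 1 one_ne_zero (by norm_num) (by simpa [pow_two] using h)
  · intro h
    exact hpow 3 three_ne_zero (by norm_num) (by rw [pow_succ, ← h, inv_mul_cancel])
  · intro h
    exact hpow 2 two_ne_zero (by norm_num) (pow_two x ▸ inv_eq_iff_mul_eq_one.mp h)

end Group

theorem identity_is_cyclic_cutset_general
    (p : ℕ) (hp : p.Prime) (G : Type*) [Group G] [Finite G] (hG : IsPGroup p G)
    (M₁ M₂ : Subgroup G) (h1 : IsMaximalCyclic M₁) (h2 : IsMaximalCyclic M₂)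
    (hint : M₁ ⊓ M₂ = ⊥)
    (hc1 : 4 ≤ Nat.card M₁) (hc2 : 4 ≤ Nat.card M₂) :
    IsCyclicVertexCutset (powerGraph G) {1} ∧
    vertexConnectivity (powerGraph G) = 1 ∧
    cyclicVertexConnectivity (powerGraph G) = 1 := by
  obtain ⟨⟨x₁, rfl⟩, -⟩ := h1
  obtain ⟨⟨x₂, rfl⟩, -⟩ := h2
  rw [Nat.card_zpowers] at hc1 hc2
  have hx₁ : x₁ ≠ 1 := fun h => by simp [h] at hc1
  have hx₂ : x₂ ≠ 1 := fun h => by simp [h] at hc2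
  let u : ↥({1}ᶜ : Set G) := ⟨x₁, hx₁⟩
  let v : ↥({1}ᶜ : Set G) := ⟨x₂, hx₂⟩
  have huv : ¬ ((powerGraph G).induce {1}ᶜ).Reachable u v :=
    hG.not_reachable_powerGraph_induce hp hint
  have hcut : IsCyclicVertexCutset (powerGraph G) {1} :=
    ⟨fun h => huv (h.preconnected u v), u, v, huv,
      powerGraph_induce_exists_isCycle hc1, powerGraph_induce_exists_isCycle hc2⟩
  have : Nontrivial G := ⟨⟨x₁, 1, hx₁⟩⟩
  exact ⟨hcut, vertexConnectivity_eq_one powerGraph_connected hcut.1,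
    cyclicVertexConnectivity_eq_one powerGraph_connected hcut⟩

/-- If a finite p-group `G` has two maximal cyclic subgroups of order at least 4 with
trivial intersection, then `{e}` is a cyclic vertex cutset of `P(G)` and
`κ(P(G)) = cκ(P(G)) = 1`. -/
theorem identity_is_cyclic_cutset
    (p : ℕ) (hp : p.Prime) (G : Type*) [Group G] [Finite G] (hG : IsPGroup p G)
    (M₁ M₂ : Subgroup G) (h1 : IsMaximalCyclic M₁) (h2 : IsMaximalCyclic M₂)
    (hne : M₁ ≠ M₂) (hint : M₁ ⊓ M₂ = ⊥)
    (hc1 : 4 ≤ Nat.card M₁) (hc2 : 4 ≤ Nat.card M₂) :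
    IsCyclicVertexCutset (powerGraph G) {1} ∧
    vertexConnectivity (powerGraph G) = 1 ∧
    cyclicVertexConnectivity (powerGraph G) = 1 :=
  identity_is_cyclic_cutset_general p hp G hG M₁ M₂ h1 h2 hint hc1 hc2
end
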